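/- Let α₁, β ∈ ℝ with α₁ ≠ 0, and let γ, λ ∈ ℝ with γ > 0, λ ≥ 0 and γ + λ ≤ 1. Write σ_x = σ(α₁x + β) and Ψ_x = γ + (1 − γ − λ)·σ_x, and define f : ℝ → ℝ by f(x) = (α₁²·σ_x·(1 − σ_x) / Ψ_x²)·((1 − 2σ_x)·Ψ_x − σ_x·(1 − σ_x)). Then f is Lebesgue integrable on ℝ and ∫_ℝ |f(x)| dx ≤ 4·α₁²/(|α₁|·γ²). -/

import Mathlib

open Real MeasureTheory

noncomputable def sigmoid (t : ℝ) : ℝ := (1 + Real.exp (-t))⁻¹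

lemma sigmoid_pos (t : ℝ) : 0 < _root_.sigmoid t := by
  unfold _root_.sigmoid; positivity

lemma sigmoid_lt_one (t : ℝ) : _root_.sigmoid t < 1 := by
  unfold _root_.sigmoid
  rw [inv_lt_one_iff₀]
  right; linarith [Real.exp_pos (-t)]

lemma sigmoid_mul_le_exp_neg_abs (t : ℝ) :
    _root_.sigmoid t * (1 - _root_.sigmoid t) ≤ Real.exp (-|t|) := by
  have ha : 0 < Real.exp (-t) := Real.exp_pos _
  have hs : _root_.sigmoid t * (1 - _root_.sigmoid t) = Real.exp (-t) / (1 + Real.exp (-t)) ^ 2 := by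
    unfold _root_.sigmoid
    field_simp
    ring
  rw [hs]
  rcases le_or_gt 0 t with ht | ht
  · rw [abs_of_nonneg ht]
    rw [div_le_iff₀ (by positivity)]
    nlinarith [mul_pos ha ha, mul_pos (mul_pos ha ha) ha]
  · rw [abs_of_neg ht, neg_neg]
    have he : Real.exp t = (Real.exp (-t))⁻¹ := by
      rw [← Real.exp_neg, neg_neg]
    rw [he, div_le_iff₀ (by positivity), inv_mul_eq_div, le_div_iff₀ ha]
    nlinarith [mul_pos ha ha, mul_pos (mul_pos ha ha) ha]

lemma continuous_sigmoid' : Continuous _root_.sigmoid := by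
  apply Continuous.inv₀
  · continuity
  · intro t; positivity

lemma integrable_exp_neg_abs : Integrable (fun t : ℝ => Real.exp (-|t|)) := by
  have h1 : IntegrableOn (fun t : ℝ => Real.exp (-|t|)) (Set.Iic 0) := by
    apply (integrableOn_exp_Iic 0).congr_fun _ measurableSet_Iic
    intro x hx
    simp only [Set.mem_Iic] at hx
    simp only [abs_of_nonpos hx, neg_neg]
  have h2 : IntegrableOn (fun t : ℝ => Real.exp (-|t|)) (Set.Ioi 0) := by
    apply (exp_neg_integrableOn_Ioi 0 one_pos).congr_fun _ measurableSet_Ioi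
    intro x hx
    simp only [Set.mem_Ioi] at hx
    simp only [abs_of_pos hx, neg_one_mul]
  simpa [Set.Iic_union_Ioi] using h1.union h2

lemma integral_exp_neg_abs : (∫ t : ℝ, Real.exp (-|t|)) = 2 := by
  have h1 : IntegrableOn (fun t : ℝ => Real.exp (-|t|)) (Set.Iic 0) :=
    integrable_exp_neg_abs.integrableOn
  have h2 : IntegrableOn (fun t : ℝ => Real.exp (-|t|)) (Set.Ioi 0) :=
    integrable_exp_neg_abs.integrableOn
  rw [← intervalIntegral.integral_Iic_add_Ioi h1 h2]
  have e1 : (∫ t in Set.Iic (0:ℝ), Real.exp (-|t|)) = ∫ t in Set.Iic (0:ℝ), Real.exp t := by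
    apply setIntegral_congr_fun measurableSet_Iic
    intro x hx
    simp only [Set.mem_Iic] at hx
    simp only [abs_of_nonpos hx, neg_neg]
  have e2 : (∫ t in Set.Ioi (0:ℝ), Real.exp (-|t|)) = ∫ t in Set.Ioi (0:ℝ), Real.exp (-t) := by
    apply setIntegral_congr_fun measurableSet_Ioi
    intro x hx
    simp only [Set.mem_Ioi] at hx
    simp only [abs_of_pos hx]
  rw [e1, e2, integral_exp_Iic_zero, integral_exp_neg_Ioi_zero]
  norm_num

/-- Integrability (with an explicit bound) of the second derivative of the
log-psychometric function. -/
theorem psychm_second_derivative_integrable (α₁ β : ℝ) (hα₁ : α₁ ≠ 0)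
    (γ lam : ℝ) (hγ : 0 < γ) (hlam : 0 ≤ lam) (hγlam : γ + lam ≤ 1) :
    let f : ℝ → ℝ := fun x =>
      (α₁ ^ 2 * _root_.sigmoid (α₁ * x + β) * (1 - _root_.sigmoid (α₁ * x + β)) /
          (γ + (1 - γ - lam) * _root_.sigmoid (α₁ * x + β)) ^ 2) *
        ((1 - 2 * _root_.sigmoid (α₁ * x + β)) * (γ + (1 - γ - lam) * _root_.sigmoid (α₁ * x + β)) -
          _root_.sigmoid (α₁ * x + β) * (1 - _root_.sigmoid (α₁ * x + β)))
    Integrable f ∧ (∫ x, |f x|) ≤ 4 * α₁ ^ 2 / (|α₁| * γ ^ 2) := by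
  intro f
  set C : ℝ := 2 * α₁ ^ 2 / γ ^ 2 with hC
  have hCnonneg : 0 ≤ C := by positivity
  -- basic facts about Ψ
  have hΨγ : ∀ t : ℝ, γ ≤ γ + (1 - γ - lam) * _root_.sigmoid t := by
    intro t
    nlinarith [_root_.sigmoid_pos t, _root_.sigmoid_lt_one t]
  have hΨ1 : ∀ t : ℝ, γ + (1 - γ - lam) * _root_.sigmoid t ≤ 1 := by
    intro t
    nlinarith [_root_.sigmoid_pos t, _root_.sigmoid_lt_one t]
  -- the dominating function
  set g : ℝ → ℝ := fun x => C * Real.exp (-|α₁ * x + β|) with hg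
  have hg_int : Integrable g := by
    have h1 : Integrable (fun y : ℝ => Real.exp (-|y + β|)) :=
      integrable_exp_neg_abs.comp_add_right β
    have h2 : Integrable (fun x : ℝ => Real.exp (-|α₁ * x + β|)) := by
      have := (integrable_comp_smul_iff (volume : Measure ℝ)
        (fun y : ℝ => Real.exp (-|y + β|)) hα₁).mpr h1
      simpa [smul_eq_mul] using this
    exact h2.const_mul C
  -- pointwise bound
  have hbound : ∀ x : ℝ, |f x| ≤ g x := by
    intro x
    set t := α₁ * x + β with ht
    set s := _root_.sigmoid t with hs
    set Ψ := γ + (1 - γ - lam) * s with hΨ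
    have hs0 : 0 < s := _root_.sigmoid_pos t
    have hs1 : s < 1 := _root_.sigmoid_lt_one t
    have hΨg : γ ≤ Ψ := hΨγ t
    have hΨl : Ψ ≤ 1 := hΨ1 t
    have hΨ0 : 0 < Ψ := lt_of_lt_of_le hγ hΨg
    have hnum : (0:ℝ) ≤ α₁ ^ 2 * s * (1 - s) :=
      mul_nonneg (mul_nonneg (sq_nonneg α₁) hs0.le) (by linarith)
    have hdiv : (0:ℝ) ≤ α₁ ^ 2 * s * (1 - s) / Ψ ^ 2 :=
      div_nonneg hnum (pow_pos hΨ0 2).le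
    have hf : f x = (α₁ ^ 2 * s * (1 - s) / Ψ ^ 2) * ((1 - 2 * s) * Ψ - s * (1 - s)) := rfl
    rw [hf, abs_mul, abs_of_nonneg hdiv]
    have h2 : |(1 - 2 * s) * Ψ - s * (1 - s)| ≤ 2 := by
      rw [abs_le]
      constructor <;> nlinarith
    have hse : s * (1 - s) ≤ Real.exp (-|t|) := sigmoid_mul_le_exp_neg_abs t
    calc (α₁ ^ 2 * s * (1 - s) / Ψ ^ 2) * |(1 - 2 * s) * Ψ - s * (1 - s)|
        ≤ (α₁ ^ 2 * s * (1 - s) / Ψ ^ 2) * 2 := mul_le_mul_of_nonneg_left h2 hdiv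
      _ ≤ (α₁ ^ 2 * (s * (1 - s)) / γ ^ 2) * 2 := by
          apply mul_le_mul_of_nonneg_right _ (by norm_num)
          rw [div_le_div_iff₀ (pow_pos hΨ0 2) (pow_pos hγ 2)]
          have hγΨ : γ ^ 2 ≤ Ψ ^ 2 := by nlinarith
          nlinarith
      _ ≤ (α₁ ^ 2 * Real.exp (-|t|) / γ ^ 2) * 2 := by gcongr
      _ = g x := by simp only [hg, hC]; ring
  -- continuity of f
  have hu : Continuous fun x : ℝ => α₁ * x + β :=
    (continuous_const.mul continuous_id).add continuous_const
  have hσ : Continuous fun x : ℝ => _root_.sigmoid (α₁ * x + β) := continuous_sigmoid'.comp hu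
  have hΨc : Continuous fun x : ℝ => γ + (1 - γ - lam) * _root_.sigmoid (α₁ * x + β) :=
    continuous_const.add (continuous_const.mul hσ)
  have hΨne : ∀ x : ℝ, (γ + (1 - γ - lam) * _root_.sigmoid (α₁ * x + β)) ^ 2 ≠ 0 := fun x =>
    (pow_pos (lt_of_lt_of_le hγ (hΨγ _)) 2).ne'
  have hf_cont : Continuous f := by
    apply Continuous.mul
    · exact ((continuous_const.mul hσ).mul (continuous_const.sub hσ)).div
        (hΨc.pow 2) hΨne
    · exact ((continuous_const.sub (continuous_const.mul hσ)).mul hΨc).sub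
        (hσ.mul (continuous_const.sub hσ))
  have hf_int : Integrable f := by
    apply Integrable.mono hg_int hf_cont.aestronglyMeasurable
    filter_upwards with x
    rw [Real.norm_eq_abs, Real.norm_eq_abs]
    exact (hbound x).trans (le_abs_self _)
  refine ⟨hf_int, ?_⟩
  -- compute the integral of g
  have hg_val : (∫ x, g x) = 2 * C / |α₁| := by
    rw [hg]
    rw [integral_const_mul]
    have h1 : (∫ x : ℝ, Real.exp (-|α₁ * x + β|)) = |α₁⁻¹| • ∫ y : ℝ, Real.exp (-|y + β|) :=
      Measure.integral_comp_mul_left (fun y : ℝ => Real.exp (-|y + β|)) α₁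
    have h2 : (∫ y : ℝ, Real.exp (-|y + β|)) = 2 := by
      rw [integral_add_right_eq_self (fun t : ℝ => Real.exp (-|t|)) β]
      exact integral_exp_neg_abs
    rw [h1, h2, smul_eq_mul, abs_inv]
    field_simp
  have hmono : (∫ x, |f x|) ≤ ∫ x, g x :=
    integral_mono hf_int.abs hg_int hbound
  have hαpos : 0 < |α₁| := abs_pos.mpr hα₁
  calc (∫ x, |f x|) ≤ ∫ x, g x := hmono
    _ = 2 * C / |α₁| := hg_val
    _ = 4 * α₁ ^ 2 / (|α₁| * γ ^ 2) := by
        rw [hC]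
        field_simp
        ring
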